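/- arXiv:2305.17383 — 4 statements merged into one kernel-verified Lean document; each statement's English description precedes it below -/
import Mathlib

section
/- Let W be an n×n doubly stochastic matrix with strictly positive diagonal entries whose associated graph (edges where w_ij > 0) is undirected and connected, and let ρ_W be the spectral norm of W - (1/n)𝟙𝟙ᵀ. Then ρ_W < 1. -/
/-! For `x ≠ 0` write `M = W - 𝟙𝟙ᵀ/n`. Then `M x = W x - x̄ 𝟙`, and since the columns of `W` sum
to one, `x̄` is also the mean of `W x`; centering does not increase the sum of squares, so
`‖M x‖ ≤ ‖W x‖`. Each row of `W` is a probability vector, so `(W x)ᵢ² ≤ ∑ⱼ Wᵢⱼ xⱼ²` with deficit the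
variance of `x` under that row; summing over `i` and using the column sums gives `‖W x‖ ≤ ‖x‖`.
If `x` is not constant, connectivity gives an edge `u ~ v` with `xᵤ ≠ xᵥ`, and the row of `u`
charges both `u` (positive diagonal) and `v`, so its variance is positive and the inequality is
strict; if `x` is constant, `M x = 0`. Finally, compactness of the unit sphere upgrades
`‖M x‖ < ‖x‖` to `‖M‖ < 1`. -/

open Finset Metric

theorem ContinuousLinearMap.opNorm_lt_one_of_norm_apply_lt {E F : Type*}
    [NormedAddCommGroup E] [NormedSpace ℝ E] [ProperSpace E]
    [NormedAddCommGroup F] [NormedSpace ℝ F] (f : E →L[ℝ] F)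
    (h : ∀ x ≠ 0, ‖f x‖ < ‖x‖) : ‖f‖ < 1 := by
  cases subsingleton_or_nontrivial E
  · simp [ContinuousLinearMap.opNorm_subsingleton]
  -- the supremum defining `‖f‖` is attained on the compact unit sphere
  obtain ⟨x, hx, hfx⟩ := ((isCompact_sphere 0 1).image (by fun_prop)).sSup_mem
    ((NormedSpace.sphere_nonempty.mpr zero_le_one).image fun x => ‖f x‖)
  rw [f.sSup_sphere_eq_norm] at hfx
  have hx1 : ‖x‖ = 1 := mem_sphere_zero_iff_norm.1 hx
  calc ‖f‖ = ‖f x‖ := hfx.symm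
    _ < ‖x‖ := h x (ne_zero_of_norm_ne_zero (by simp [hx1]))
    _ = 1 := hx1

theorem SimpleGraph.Preconnected.exists_adj_ne {V α : Type*} {G : SimpleGraph V}
    (hG : G.Preconnected) {f : V → α} {a b : V} (hab : f a ≠ f b) :
    ∃ u v, G.Adj u v ∧ f u ≠ f v := by
  obtain ⟨p⟩ := hG a b
  obtain ⟨d, -, hd, hd'⟩ := p.exists_boundary_dart {v | f v = f a} rfl hab.symm
  exact ⟨d.fst, d.snd, d.adj, fun h => hd' (h.symm.trans hd)⟩

section WeightedVariance

variable {ι : Type*} [Fintype ι] {w y : ι → ℝ}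

theorem sq_weightedSum_add_weightedVariance (hw : ∑ i, w i = 1) :
    (∑ i, w i * y i) ^ 2 + ∑ i, w i * (y i - ∑ j, w j * y j) ^ 2 = ∑ i, w i * y i ^ 2 := by
  set m := ∑ j, w j * y j
  have h : ∀ i, w i * (y i - m) ^ 2 = w i * y i ^ 2 - 2 * m * (w i * y i) + m ^ 2 * w i :=
    fun i => by ring
  rw [sum_congr rfl fun i _ => h i, sum_add_distrib, sum_sub_distrib, ← mul_sum, ← mul_sum, hw]
  ring

theorem sq_weightedSum_le (hw0 : ∀ i, 0 ≤ w i) (hw : ∑ i, w i = 1) :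
    (∑ i, w i * y i) ^ 2 ≤ ∑ i, w i * y i ^ 2 := by
  rw [← sq_weightedSum_add_weightedVariance hw, le_add_iff_nonneg_right]
  exact sum_nonneg fun i _ => mul_nonneg (hw0 i) (sq_nonneg _)

theorem sq_weightedSum_lt (hw0 : ∀ i, 0 ≤ w i) (hw : ∑ i, w i = 1) {j k : ι}
    (hj : 0 < w j) (hk : 0 < w k) (hjk : y j ≠ y k) :
    (∑ i, w i * y i) ^ 2 < ∑ i, w i * y i ^ 2 := by
  rw [← sq_weightedSum_add_weightedVariance hw, lt_add_iff_pos_right]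
  set m := ∑ i, w i * y i
  -- `y j` and `y k` cannot both equal the mean
  obtain ⟨l, hl, hlm⟩ : ∃ l, 0 < w l ∧ y l ≠ m := by
    by_cases hjm : y j = m
    · exact ⟨k, hk, fun hkm => hjk (hjm.trans hkm.symm)⟩
    · exact ⟨j, hj, hjm⟩
  exact sum_pos' (fun i _ => mul_nonneg (hw0 i) (sq_nonneg _))
    ⟨l, mem_univ l, mul_pos hl (pow_two_pos_of_ne_zero (sub_ne_zero.2 hlm))⟩

end WeightedVariance

namespace Matrix

variable {ι : Type*} [Fintype ι] {W : Matrix ι ι ℝ}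

theorem sum_sq_sub_mean_le (z : ι → ℝ) :
    ∑ i, (z i - (∑ j, z j) / Fintype.card ι) ^ 2 ≤ ∑ i, z i ^ 2 := by
  rcases isEmpty_or_nonempty ι with hι | hι
  · simp
  set c := (∑ j, z j) / Fintype.card ι
  have hsum : ∑ j, z j = Fintype.card ι * c := by
    rw [mul_div_cancel₀ _ (Nat.cast_ne_zero.2 Fintype.card_ne_zero)]
  have h : ∀ i, (z i - c) ^ 2 = z i ^ 2 - 2 * c * z i + c ^ 2 := fun i => by ring
  rw [sum_congr rfl fun i _ => h i, sum_add_distrib, sum_sub_distrib, ← mul_sum, hsum,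
    sum_const, card_univ, nsmul_eq_mul]
  nlinarith [sq_nonneg c, (Nat.cast_nonneg (Fintype.card ι) : (0 : ℝ) ≤ _)]

theorem sum_mulVec_of_sum_col (hcol : ∀ j, ∑ i, W i j = 1) (x : ι → ℝ) :
    ∑ i, (W *ᵥ x) i = ∑ i, x i := by
  simp only [mulVec, dotProduct]
  rw [sum_comm]
  simp [← sum_mul, hcol]

theorem mulVec_const_of_sum_row (hrow : ∀ i, ∑ j, W i j = 1) (c : ℝ) :
    W *ᵥ (fun _ => c) = fun _ => c := by
  ext i
  simp [mulVec, dotProduct, ← sum_mul, hrow]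

theorem sum_sq_mulVec_lt (hnonneg : ∀ i j, 0 ≤ W i j) (hrow : ∀ i, ∑ j, W i j = 1)
    (hcol : ∀ j, ∑ i, W i j = 1) {x : ι → ℝ} {i j k : ι} (hij : 0 < W i j) (hik : 0 < W i k)
    (hjk : x j ≠ x k) : ∑ i, (W *ᵥ x) i ^ 2 < ∑ i, x i ^ 2 :=
  calc ∑ i, (W *ᵥ x) i ^ 2 < ∑ i, ∑ j, W i j * x j ^ 2 :=
        sum_lt_sum (fun l _ => sq_weightedSum_le (hnonneg l) (hrow l))
          ⟨i, mem_univ i, sq_weightedSum_lt (hnonneg i) (hrow i) hij hik hjk⟩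
    _ = ∑ j, x j ^ 2 := by
        rw [sum_comm]
        simp [← sum_mul, hcol]

theorem sum_sq_sub_averaging_mulVec_lt (hnonneg : ∀ i j, 0 ≤ W i j)
    (hrow : ∀ i, ∑ j, W i j = 1) (hcol : ∀ j, ∑ i, W i j = 1) (hdiag : ∀ i, 0 < W i i)
    (hconn : (SimpleGraph.fromRel fun i j => 0 < W i j).Preconnected) {x : ι → ℝ}
    (hx : x ≠ 0) :
    ∑ i, ((W - (1 / (Fintype.card ι : ℝ)) • of fun _ _ => 1) *ᵥ x) i ^ 2 < ∑ i, x i ^ 2 := by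
  have hM : (W - (1 / (Fintype.card ι : ℝ)) • of fun _ _ => 1) *ᵥ x =
      fun i => (W *ᵥ x) i - (∑ j, x j) / Fintype.card ι := by
    ext i
    simp [mulVec, dotProduct, sub_mul, sum_sub_distrib, ← mul_sum, div_eq_inv_mul]
  rw [hM, ← sum_mulVec_of_sum_col hcol x]
  by_cases hconst : ∃ j k, x j ≠ x k
  · obtain ⟨j, k, hjk⟩ := hconst
    obtain ⟨u, v, ⟨-, huv | hvu⟩, hne⟩ := hconn.exists_adj_ne hjk
    · exact (sum_sq_sub_mean_le _).trans_lt
        (sum_sq_mulVec_lt hnonneg hrow hcol (hdiag u) huv hne)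
    · exact (sum_sq_sub_mean_le _).trans_lt
        (sum_sq_mulVec_lt hnonneg hrow hcol (hdiag v) hvu hne.symm)
  · push Not at hconst
    obtain ⟨j, hj⟩ : ∃ j, x j ≠ 0 := Function.ne_iff.1 hx
    have hxj : x = fun _ => x j := funext fun k => hconst k j
    rw [hxj, mulVec_const_of_sum_row hrow]
    have hcard : 0 < Fintype.card ι := Fintype.card_pos_iff.2 ⟨j⟩
    simp [mul_div_cancel_left₀, hcard.ne', hcard, pow_two_pos_of_ne_zero hj]

end Matrix

theorem stmt_2_general {n : ℕ} (W : Matrix (Fin n) (Fin n) ℝ)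
    (hnonneg : ∀ i j, 0 ≤ W i j)
    (hrow : ∀ i, ∑ j, W i j = 1)
    (hcol : ∀ j, ∑ i, W i j = 1)
    (hdiag : ∀ i, 0 < W i i)
    (hconn : (SimpleGraph.fromRel (fun i j : Fin n => 0 < W i j)).Connected) :
    ‖Matrix.toEuclideanCLM (𝕜 := ℝ)
        (W - (1 / (n : ℝ)) • Matrix.of (fun _ _ : Fin n => (1 : ℝ)))‖ < 1 := by
  refine ContinuousLinearMap.opNorm_lt_one_of_norm_apply_lt _ fun x hx => ?_
  rw [← sq_lt_sq₀ (norm_nonneg _) (norm_nonneg _), EuclideanSpace.real_norm_sq_eq,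
    EuclideanSpace.real_norm_sq_eq]
  have := W.sum_sq_sub_averaging_mulVec_lt hnonneg hrow hcol hdiag hconn.preconnected
    (x := WithLp.ofLp x) (by simpa using hx)
  rw [Fintype.card_fin] at this
  simpa only [Matrix.ofLp_toEuclideanCLM] using this

theorem stmt_2 {n : ℕ} (hn : 0 < n) (W : Matrix (Fin n) (Fin n) ℝ)
    (hnonneg : ∀ i j, 0 ≤ W i j)
    (hrow : ∀ i, ∑ j, W i j = 1)
    (hcol : ∀ j, ∑ i, W i j = 1)
    (hdiag : ∀ i, 0 < W i i)
    (hsym : ∀ i j, W i j = W j i)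
    (hconn : (SimpleGraph.fromRel (fun i j : Fin n => 0 < W i j)).Connected) :
    ‖Matrix.toEuclideanCLM (𝕜 := ℝ)
        (W - (1 / (n : ℝ)) • Matrix.of (fun _ _ : Fin n => (1 : ℝ)))‖ < 1 :=
  stmt_2_general W hnonneg hrow hcol hdiag hconn
end

section
/- Under the DPPA iteration x_k(t+1) + η∇f_k(x_k(t+1)) = ∑_j w_kj x_j(t) with each f_k L-smooth and W doubly stochastic with consensus contraction factor ρ_W, the consensus error satisfies B_{t+1} ≤ ρ_W B_t + ηL B_{t+1} + ηL A_{t+1} + ηD, where D = max_i ‖∇f_i(x_*)‖, A_t = ‖x̄(t) - x_*‖, and B_t = (1/√n)‖x(t) - x̄(t)‖ (stacked vectors). -/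
/-!
Stack the agents' states into `ℓ²(Fin n; E)`. Subtracting means in the DPPA step gives
`Y - Ȳ = W (X - X̄) - η (g - ḡ)` with `g k = ∇f_k (Y k)`, because `W` has unit row and column
sums. The contraction property bounds the first term by `ρ ‖X - X̄‖`, and centring does not
increase the `ℓ²` norm of the second. Smoothness gives `‖g k‖ ≤ L ‖Y k - Ȳ‖ + L ‖Ȳ - x⋆‖ + D`
for each `k`, so by Minkowski `‖g‖ ≤ L ‖Y - Ȳ‖ + √n (L A + D)`. Divide by `√n`.
-/

open Finset

section L2

variable {ι : Type*} [Fintype ι] {E : Type*} [SeminormedAddCommGroup E]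

lemma norm_toLp_two_le_mul_add {L c : ℝ} (hL : 0 ≤ L) (hc : 0 ≤ c) {g y : ι → E}
    (h : ∀ i, ‖g i‖ ≤ L * ‖y i‖ + c) :
    ‖WithLp.toLp 2 g‖ ≤ L * ‖WithLp.toLp 2 y‖ + √(Fintype.card ι) * c := by
  have hpt : ‖WithLp.toLp 2 g‖ ≤ ‖WithLp.toLp 2 (fun i => L * ‖y i‖ + c)‖ := by
    simp only [PiLp.norm_eq_of_L2, Real.norm_eq_abs, sq_abs]
    gcongr with i
    exact h i
  have hnorms : ‖WithLp.toLp 2 (fun i => ‖y i‖)‖ = ‖WithLp.toLp 2 y‖ := by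
    simp only [PiLp.norm_eq_of_L2, norm_norm]
  calc ‖WithLp.toLp 2 g‖
      ≤ ‖WithLp.toLp 2 (L • fun i => ‖y i‖) + WithLp.toLp 2 (Function.const ι c)‖ := hpt
    _ ≤ _ := norm_add_le _ _
    _ = L * ‖WithLp.toLp 2 y‖ + √(Fintype.card ι) * c := by
      rw [WithLp.toLp_smul, norm_smul, hnorms, PiLp.norm_toLp_const (by simp)]
      simp [Real.sqrt_eq_rpow, abs_of_nonneg hL, abs_of_nonneg hc]

end L2

section Mean

variable {n : ℕ} {E : Type*} [NormedAddCommGroup E] [InnerProductSpace ℝ E]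

noncomputable def mean (y : Fin n → E) : E := (1 / (n : ℝ)) • ∑ k, y k

lemma mean_sub_smul (y g : Fin n → E) (η : ℝ) :
    mean (fun k => y k - η • g k) = mean y - η • mean g := by
  simp only [mean, sum_sub_distrib, ← smul_sum, smul_sub, smul_comm η]

lemma mean_mix {W : Matrix (Fin n) (Fin n) ℝ} (hcol : ∀ j, ∑ i, W i j = 1) (y : Fin n → E) :
    mean (fun i => ∑ j, W i j • y j) = mean y := by
  simp only [mean, sum_comm (γ := Fin n), ← sum_smul, hcol, one_smul]

lemma mix_sub_const {W : Matrix (Fin n) (Fin n) ℝ} (hrow : ∀ i, ∑ j, W i j = 1)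
    (y : Fin n → E) (c : E) (i : Fin n) :
    ∑ j, W i j • (y j - c) = ∑ j, W i j • y j - c := by
  simp only [smul_sub, sum_sub_distrib, ← sum_smul, hrow, one_smul]

lemma sum_norm_sub_mean_sq (y : Fin n → E) :
    ∑ k, ‖y k - mean y‖ ^ 2 = ∑ k, ‖y k‖ ^ 2 - 1 / (n : ℝ) * ‖∑ k, y k‖ ^ 2 := by
  have hinner : ∑ k, inner ℝ (y k) (mean y) = 1 / (n : ℝ) * ‖∑ k, y k‖ ^ 2 := by
    rw [← sum_inner, mean, real_inner_smul_right, real_inner_self_eq_norm_sq]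
  have hmean : (n : ℝ) * ‖mean y‖ ^ 2 = 1 / (n : ℝ) * ‖∑ k, y k‖ ^ 2 := by
    rw [mean, norm_smul, Real.norm_of_nonneg (by positivity)]
    rcases Nat.eq_zero_or_pos n with rfl | hn
    · simp
    · field_simp
  simp only [norm_sub_sq_real, sum_add_distrib, sum_sub_distrib, ← mul_sum, hinner, sum_const,
    card_fin, nsmul_eq_mul, hmean]
  ring

lemma sum_norm_sub_mean_sq_le (y : Fin n → E) :
    ∑ k, ‖y k - mean y‖ ^ 2 ≤ ∑ k, ‖y k‖ ^ 2 := by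
  rw [sum_norm_sub_mean_sq]
  have : 0 ≤ 1 / (n : ℝ) * ‖∑ k, y k‖ ^ 2 := by positivity
  linarith

variable {W : Matrix (Fin n) (Fin n) ℝ}

lemma sub_mean_of_step (hrow : ∀ i, ∑ j, W i j = 1) (hcol : ∀ j, ∑ i, W i j = 1)
    {X Y g : Fin n → E} {η : ℝ} (hstep : ∀ i, Y i + η • g i = ∑ j, W i j • X j) (i : Fin n) :
    Y i - mean Y = ∑ j, W i j • (X j - mean X) - η • (g i - mean g) := by
  have hY : Y = fun i => ∑ j, W i j • X j - η • g i :=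
    funext fun i => eq_sub_of_add_eq (hstep i)
  have hmeanY : mean Y = mean X - η • mean g := by
    rw [hY, mean_sub_smul, mean_mix hcol]
  rw [mix_sub_const hrow, hmeanY, congrFun hY i]
  module

lemma norm_sub_mean_step_le (hrow : ∀ i, ∑ j, W i j = 1) (hcol : ∀ j, ∑ i, W i j = 1)
    {ρ η : ℝ} (hρ : 0 ≤ ρ) (hη : 0 ≤ η)
    (hcontr : ∀ y : Fin n → E,
      ∑ i, ‖∑ j, W i j • (y j - mean y)‖ ^ 2 ≤ ρ ^ 2 * ∑ i, ‖y i - mean y‖ ^ 2)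
    {X Y g : Fin n → E} (hstep : ∀ i, Y i + η • g i = ∑ j, W i j • X j) :
    ‖WithLp.toLp 2 (fun i => Y i - mean Y)‖
      ≤ ρ * ‖WithLp.toLp 2 (fun i => X i - mean X)‖ + η * ‖WithLp.toLp 2 g‖ := by
  have hmix : ‖WithLp.toLp 2 (fun i => ∑ j, W i j • (X j - mean X))‖
      ≤ ρ * ‖WithLp.toLp 2 (fun i => X i - mean X)‖ := by
    refine le_of_sq_le_sq ?_ (by positivity)
    simpa only [mul_pow, PiLp.norm_sq_eq_of_L2] using hcontr X
  have hvar : ‖WithLp.toLp 2 (fun i => g i - mean g)‖ ≤ ‖WithLp.toLp 2 g‖ := by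
    simp only [PiLp.norm_eq_of_L2]
    exact Real.sqrt_le_sqrt (sum_norm_sub_mean_sq_le g)
  calc ‖WithLp.toLp 2 (fun i => Y i - mean Y)‖
      = ‖WithLp.toLp 2 (fun i => ∑ j, W i j • (X j - mean X))
          - η • WithLp.toLp 2 (fun i => g i - mean g)‖ := by
        congr 1
        ext i
        simp [sub_mean_of_step hrow hcol hstep i]
    _ ≤ ‖WithLp.toLp 2 (fun i => ∑ j, W i j • (X j - mean X))‖
          + η * ‖WithLp.toLp 2 (fun i => g i - mean g)‖ := by
        grw [norm_sub_le, norm_smul, Real.norm_of_nonneg hη]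
    _ ≤ _ := by gcongr

lemma norm_gradients_le {L D : ℝ} (hL : 0 ≤ L) (hD₀ : 0 ≤ D)
    {f' : Fin n → E → E} (hsmooth : ∀ k u v, ‖f' k u - f' k v‖ ≤ L * ‖u - v‖)
    {xstar : E} (hD : ∀ k, ‖f' k xstar‖ ≤ D) (Y : Fin n → E) :
    ‖WithLp.toLp 2 (fun k => f' k (Y k))‖
      ≤ L * ‖WithLp.toLp 2 (fun k => Y k - mean Y)‖ + √n * (L * ‖mean Y - xstar‖ + D) := by
  have hpt : ∀ k, ‖f' k (Y k)‖ ≤ L * ‖Y k - mean Y‖ + (L * ‖mean Y - xstar‖ + D) := fun k =>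
    calc ‖f' k (Y k)‖ ≤ ‖f' k (Y k) - f' k xstar‖ + ‖f' k xstar‖ := norm_le_norm_sub_add _ _
      _ ≤ L * (‖Y k - mean Y‖ + ‖mean Y - xstar‖) + D := by
        grw [hsmooth, hD, norm_sub_le_norm_sub_add_norm_sub _ (mean Y)]
      _ = _ := by ring
  simpa only [Fintype.card_fin] using norm_toLp_two_le_mul_add hL (by positivity) hpt

end Mean

theorem stmt_5_general {n d : ℕ} (hn : 0 < n)
    (f' : Fin n → EuclideanSpace ℝ (Fin d) → EuclideanSpace ℝ (Fin d))
    (L η ρ D : ℝ) (hL : 0 < L) (hη : 0 < η) (hρpos : 0 ≤ ρ)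
    (hsmooth : ∀ k (u v : EuclideanSpace ℝ (Fin d)), ‖f' k u - f' k v‖ ≤ L * ‖u - v‖)
    (W : Matrix (Fin n) (Fin n) ℝ)
    (hrow : ∀ i, ∑ j, W i j = 1)
    (hcol : ∀ j, ∑ i, W i j = 1)
    (hcontr : ∀ y : Fin n → EuclideanSpace ℝ (Fin d),
      ∑ i, ‖∑ j, W i j • (y j - (1 / (n : ℝ)) • ∑ k, y k)‖ ^ 2
        ≤ ρ ^ 2 * ∑ i, ‖y i - (1 / (n : ℝ)) • ∑ k, y k‖ ^ 2)
    (x : ℕ → Fin n → EuclideanSpace ℝ (Fin d))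
    (hiter : ∀ t k, x (t + 1) k + η • f' k (x (t + 1) k) = ∑ j, W k j • x t j)
    (xstar : EuclideanSpace ℝ (Fin d))
    (hD : ∀ i, ‖f' i xstar‖ ≤ D)
    (A B : ℕ → ℝ)
    (hA : ∀ t, A t = ‖(1 / (n : ℝ)) • (∑ k, x t k) - xstar‖)
    (hB : ∀ t, B t = Real.sqrt ((1 / (n : ℝ)) *
        ∑ k, ‖x t k - (1 / (n : ℝ)) • (∑ j, x t j)‖ ^ 2)) :
    ∀ t, B (t + 1) ≤ ρ * B t + η * L * B (t + 1) + η * L * A (t + 1) + η * D := by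
  intro t
  have hn' : (0 : ℝ) < n := Nat.cast_pos.mpr hn
  have hsqrt_n : 0 < √(n : ℝ) := Real.sqrt_pos.mpr hn'
  have hB_norm : ∀ s, √n * B s = ‖WithLp.toLp 2 (fun k => x s k - mean (x s))‖ := fun s => by
    rw [hB, ← Real.sqrt_mul (Nat.cast_nonneg n), ← mul_assoc, mul_one_div_cancel hn'.ne',
      one_mul, PiLp.norm_eq_of_L2]
    rfl
  have hconsensus := norm_sub_mean_step_le hrow hcol hρpos hη.le hcontr (hiter t)
  have hD₀ : 0 ≤ D := (norm_nonneg _).trans (hD ⟨0, hn⟩)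
  have hgrad := norm_gradients_le hL.le hD₀ hsmooth hD (x (t + 1))
  have hA_mean : A (t + 1) = ‖mean (x (t + 1)) - xstar‖ := hA (t + 1)
  rw [← hB_norm, ← hB_norm] at hconsensus
  rw [← hB_norm, ← hA_mean] at hgrad
  refine le_of_mul_le_mul_left ?_ hsqrt_n
  calc √n * B (t + 1)
      ≤ ρ * (√n * B t) + η * (L * (√n * B (t + 1)) + √n * (L * A (t + 1) + D)) := by
        grw [hconsensus, hgrad]
    _ = √n * (ρ * B t + η * L * B (t + 1) + η * L * A (t + 1) + η * D) := by ring

theorem stmt_5 {n d : ℕ} (hn : 0 < n)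
    (f : Fin n → EuclideanSpace ℝ (Fin d) → ℝ)
    (f' : Fin n → EuclideanSpace ℝ (Fin d) → EuclideanSpace ℝ (Fin d))
    (hdiff : ∀ k x, HasGradientAt (f k) (f' k x) x)
    (L η ρ D : ℝ) (hL : 0 < L) (hη : 0 < η) (hρpos : 0 ≤ ρ)
    (hsmooth : ∀ k (u v : EuclideanSpace ℝ (Fin d)), ‖f' k u - f' k v‖ ≤ L * ‖u - v‖)
    (W : Matrix (Fin n) (Fin n) ℝ)
    (hnonneg : ∀ i j, 0 ≤ W i j)
    (hrow : ∀ i, ∑ j, W i j = 1)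
    (hcol : ∀ j, ∑ i, W i j = 1)
    (hcontr : ∀ y : Fin n → EuclideanSpace ℝ (Fin d),
      ∑ i, ‖∑ j, W i j • (y j - (1 / (n : ℝ)) • ∑ k, y k)‖ ^ 2
        ≤ ρ ^ 2 * ∑ i, ‖y i - (1 / (n : ℝ)) • ∑ k, y k‖ ^ 2)
    (x : ℕ → Fin n → EuclideanSpace ℝ (Fin d))
    (hiter : ∀ t k, x (t + 1) k + η • f' k (x (t + 1) k) = ∑ j, W k j • x t j)
    (xstar : EuclideanSpace ℝ (Fin d))
    (hmin : ∑ k, f' k xstar = 0)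
    (hD : ∀ i, ‖f' i xstar‖ ≤ D)
    (A B : ℕ → ℝ)
    (hA : ∀ t, A t = ‖(1 / (n : ℝ)) • (∑ k, x t k) - xstar‖)
    (hB : ∀ t, B t = Real.sqrt ((1 / (n : ℝ)) *
        ∑ k, ‖x t k - (1 / (n : ℝ)) • (∑ j, x t j)‖ ^ 2)) :
    ∀ t, B (t + 1) ≤ ρ * B t + η * L * B (t + 1) + η * L * A (t + 1) + η * D :=
  stmt_5_general hn f' L η ρ D hL hη hρpos hsmooth W hrow hcol hcontr x hiter xstar hD A B hA hB
end

section
/- Let α, L, η > 0 with 0 < ρ_W < 1 and suppose the nonnegative sequences (A_t), (B_t) satisfy (1+ηα)A_{t+1} ≤ A_t + ηL B_{t+1} and B_{t+1} ≤ ρ_W B_t + ηL B_{t+1} + ηL A_{t+1} + ηD for all t ≥ 0, for some D ≥ 0. If the stepsize satisfies η²(α² + αL) + η(α + L - (1-ρ_W)α²/L) < (1-ρ_W)α/L, then A_t ≤ R and B_t ≤ (α/L)R for all t ≥ 0, where R = max{A_0, (L/α)B_0, (L/α)B_1, ηD / ((α/L)(1 - ηL - η²L²/(1+ηα)) - (α/L)ρ_W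 - ηL/(1+ηα))}. -/
/-!
Write `u = 1 + ηα`. Multiplying the `B`-recursion by `u` and adding `ηL` times the `A`-recursion
eliminates `A_{t+1}`, leaving `(u(1 - ηL) - η²L²) B_{t+1} ≤ ρ u B_t + ηL A_t + ηD u`. The box
`A ≤ R`, `B ≤ (α/L) R` is therefore invariant as soon as `ηD ≤ R · Den`, where `Den` is the
denominator in the definition of `R`; cleared of its fractions, `Den > 0` is exactly the stepsize
condition. The `A`-recursion then keeps `A_{t+1} ≤ R`.
-/

/-- The denominator in the definition of `R`. -/
noncomputable def dppaDenom (α L η ρ : ℝ) : ℝ :=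
  (α / L) * (1 - η * L - η ^ 2 * L ^ 2 / (1 + η * α)) - (α / L) * ρ - η * L / (1 + η * α)

section

variable {α L η ρ : ℝ}

lemma dppaDenom_mul_eq (hL : 0 < L) (hu : 0 < 1 + η * α) :
    dppaDenom α L η ρ * (L * (1 + η * α))
      = α * ((1 + η * α) * (1 - η * L) - η ^ 2 * L ^ 2) - α * ρ * (1 + η * α) - η * L ^ 2 := by
  rw [dppaDenom]
  generalize 1 + η * α = u at hu ⊢
  field_simp

lemma dppaDenom_pos (hα : 0 < α) (hL : 0 < L) (hη : 0 < η)
    (hstep : η ^ 2 * (α ^ 2 + α * L) + η * (α + L - (1 - ρ) * α ^ 2 / L) < (1 - ρ) * α / L) :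
    0 < dppaDenom α L η ρ := by
  have hu : 0 < 1 + η * α := by positivity
  have hcleared : η ^ 2 * (α ^ 2 + α * L) * L + η * (α * L + L ^ 2) - η * (1 - ρ) * α ^ 2
      < (1 - ρ) * α := by
    have h := mul_lt_mul_of_pos_right hstep hL
    field_simp at h
    linarith
  refine pos_of_mul_pos_left ?_ (by positivity : 0 ≤ L * (1 + η * α))
  rw [dppaDenom_mul_eq hL hu]
  linarith

variable {D R a b a' b' : ℝ}

lemma elim_A_succ (hα : 0 ≤ α) (hη : 0 ≤ η) (hL : 0 ≤ L)
    (h1 : (1 + η * α) * a' ≤ a + η * L * b')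
    (h2 : b' ≤ ρ * b + η * L * b' + η * L * a' + η * D) :
    ((1 + η * α) * (1 - η * L) - η ^ 2 * L ^ 2) * b'
      ≤ ρ * (1 + η * α) * b + η * L * a + η * D * (1 + η * α) := by
  nlinarith [mul_le_mul_of_nonneg_left h2 (by positivity : 0 ≤ 1 + η * α),
    mul_le_mul_of_nonneg_left h1 (by positivity : 0 ≤ η * L)]

lemma succ_B_bound (hα : 0 < α) (hL : 0 < L) (hη : 0 < η) (hρ : 0 ≤ ρ)
    (hden : 0 < dppaDenom α L η ρ) (hRD : η * D ≤ R * dppaDenom α L η ρ)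
    (hA : a ≤ R) (hB : b ≤ α / L * R)
    (h1 : (1 + η * α) * a' ≤ a + η * L * b')
    (h2 : b' ≤ ρ * b + η * L * b' + η * L * a' + η * D) :
    b' ≤ α / L * R := by
  have hu : 0 < 1 + η * α := by positivity
  set P := (1 + η * α) * (1 - η * L) - η ^ 2 * L ^ 2
  have hDen := dppaDenom_mul_eq (ρ := ρ) hL hu
  -- `Den > 0` forces `αP > αρu + ηL² ≥ 0`.
  have hPpos : 0 < P := by
    have : 0 < dppaDenom α L η ρ * (L * (1 + η * α)) := by positivity
    nlinarith [mul_nonneg hρ hu.le]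
  have hLb : L * b ≤ α * R := by
    rw [div_mul_eq_mul_div, le_div_iff₀ hL] at hB
    linarith
  have hRDu := mul_le_mul_of_nonneg_right hRD (by positivity : 0 ≤ L * (1 + η * α))
  rw [mul_assoc R, hDen] at hRDu
  have hLbP : (L * b') * P ≤ (α * R) * P := by
    nlinarith [elim_A_succ hα.le hη.le hL.le h1 h2,
      mul_le_mul_of_nonneg_left hLb (by positivity : 0 ≤ ρ * (1 + η * α)),
      mul_le_mul_of_nonneg_left hA (by positivity : 0 ≤ η * L ^ 2)]
  rw [div_mul_eq_mul_div, le_div_iff₀' hL]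
  exact le_of_mul_le_mul_right hLbP hPpos

lemma succ_A_bound (hα : 0 < α) (hL : 0 < L) (hη : 0 < η)
    (hA : a ≤ R) (hB' : b' ≤ α / L * R) (h1 : (1 + η * α) * a' ≤ a + η * L * b') :
    a' ≤ R := by
  have hLb : η * L * b' ≤ η * α * R := by
    calc η * L * b' ≤ η * L * (α / L * R) := by gcongr
      _ = η * α * R := by field_simp
  have hu : 0 < 1 + η * α := by positivity
  exact le_of_mul_le_mul_left (by linarith : (1 + η * α) * a' ≤ (1 + η * α) * R) hu

end

theorem stmt_8_general (α L η ρ D : ℝ) (hα : 0 < α) (hL : 0 < L) (hη : 0 < η)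
    (hρ : 0 < ρ)
    (A B : ℕ → ℝ)
    (hrec1 : ∀ t, (1 + η * α) * A (t + 1) ≤ A t + η * L * B (t + 1))
    (hrec2 : ∀ t, B (t + 1) ≤ ρ * B t + η * L * B (t + 1) + η * L * A (t + 1) + η * D)
    (hstep : η ^ 2 * (α ^ 2 + α * L) + η * (α + L - (1 - ρ) * α ^ 2 / L)
        < (1 - ρ) * α / L)
    (R : ℝ)
    (hR : R = max (max (A 0) ((L / α) * B 0)) (max ((L / α) * B 1)
        (η * D / ((α / L) * (1 - η * L - η ^ 2 * L ^ 2 / (1 + η * α))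
            - (α / L) * ρ - η * L / (1 + η * α))))) :
    ∀ t, A t ≤ R ∧ B t ≤ (α / L) * R := by
  have hden : 0 < dppaDenom α L η ρ := dppaDenom_pos hα hL hη hstep
  have hRD : η * D ≤ R * dppaDenom α L η ρ :=
    (div_le_iff₀ hden).mp (hR ▸ le_max_of_le_right (le_max_right _ _))
  intro t
  induction t with
  | zero =>
    refine ⟨hR ▸ le_max_of_le_left (le_max_left _ _), ?_⟩
    have h : L / α * B 0 ≤ R := hR ▸ le_max_of_le_left (le_max_right _ _)
    rw [div_mul_eq_mul_div, div_le_iff₀ hα] at h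
    rw [div_mul_eq_mul_div, le_div_iff₀ hL]
    linarith
  | succ t ih =>
    have hB := succ_B_bound hα hL hη hρ.le hden hRD ih.1 ih.2 (hrec1 t) (hrec2 t)
    exact ⟨succ_A_bound hα hL hη ih.1 hB (hrec1 t), hB⟩

theorem stmt_8 (α L η ρ D : ℝ) (hα : 0 < α) (hL : 0 < L) (hη : 0 < η)
    (hρ : 0 < ρ) (hρ1 : ρ < 1) (hD : 0 ≤ D)
    (A B : ℕ → ℝ) (hAnonneg : ∀ t, 0 ≤ A t) (hBnonneg : ∀ t, 0 ≤ B t)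
    (hrec1 : ∀ t, (1 + η * α) * A (t + 1) ≤ A t + η * L * B (t + 1))
    (hrec2 : ∀ t, B (t + 1) ≤ ρ * B t + η * L * B (t + 1) + η * L * A (t + 1) + η * D)
    (hstep : η ^ 2 * (α ^ 2 + α * L) + η * (α + L - (1 - ρ) * α ^ 2 / L)
        < (1 - ρ) * α / L)
    (R : ℝ)
    (hR : R = max (max (A 0) ((L / α) * B 0)) (max ((L / α) * B 1)
        (η * D / ((α / L) * (1 - η * L - η ^ 2 * L ^ 2 / (1 + η * α))
            - (α / L) * ρ - η * L / (1 + η * α))))) :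
    ∀ t, A t ≤ R ∧ B t ≤ (α / L) * R :=
  stmt_8_general α L η ρ D hα hL hη hρ A B hrec1 hrec2 hstep R hR
end

section
/- Suppose nonnegative sequences (A_t), (B_t) satisfy (1+ηα)A_{t+1} ≤ A_t + ηL B_{t+1} and B_t ≤ ρ^t B_0 + (η/(1-ρ))C for all t, where η, α, L, C > 0 and ρ ∈ (0,1). Then A_t ≤ A_0/(1+ηα)^t + (tηL B_0 ρ/(1+ηα)) max{ρ, 1/(1+ηα)}^{t-1} + ηL C/(α(1-ρ)) for all t ≥ 0. -/
/-!
The right-hand side `X t` of the bound is a supersolution of the linear recursion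
`(1 + ηα) X (t+1) ≥ X t + ηL (ρ^(t+1) B₀ + ηC/(1-ρ))` that `A` is a subsolution of (after inserting the
bound on `B`), and `A 0 ≤ X 0`; dividing by `1 + ηα > 0` propagates `A t ≤ X t`. Of the three terms of
`X`, the first solves the homogeneous recursion, the last is the fixed point for the constant forcing, and
the middle one absorbs the geometric forcing `ρ^(t+1)`, which is where the rate `max ρ (1/(1+ηα))` enters.
-/

section
variable {K : Type*} [Field K] [LinearOrder K] [IsStrictOrderedRing K]

theorem le_of_mul_succ_le_of_le_mul_succ {P : K} (hP : 0 < P) {a x g : ℕ → K}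
    (ha : ∀ t, P * a (t + 1) ≤ a t + g t) (hx : ∀ t, x t + g t ≤ P * x (t + 1))
    (h0 : a 0 ≤ x 0) : ∀ t, a t ≤ x t
  | 0 => h0
  | t + 1 => le_of_mul_le_mul_left ((ha t).trans <|
      (add_le_add_left (le_of_mul_succ_le_of_le_mul_succ hP ha hx h0 t) _).trans (hx t)) hP

theorem nat_mul_mul_pow_pred_add_pow_le {q ρ r : K} (hρ : 0 ≤ ρ) (hρr : ρ ≤ r) (hqr : q ≤ r) :
    ∀ n : ℕ, n * q * r ^ (n - 1) + ρ ^ n ≤ (n + 1) * r ^ n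
  | 0 => by simp
  | n + 1 => by
    have hr : 0 ≤ r := hρ.trans hρr
    have hq : q * r ^ n ≤ r ^ (n + 1) := by
      rw [pow_succ']; exact mul_le_mul_of_nonneg_right hqr (pow_nonneg hr n)
    have hρn : ρ ^ (n + 1) ≤ r ^ (n + 1) := pow_le_pow_left₀ hρ hρr _
    have hn : (0 : K) ≤ n + 1 := by positivity
    rw [Nat.add_sub_cancel]
    push_cast
    nlinarith [mul_le_mul_of_nonneg_left hq hn]

end

theorem stmt_12_general (η α L C ρ : ℝ) (hη : 0 < η) (hα : 0 < α) (hL : 0 < L)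
    (hC : 0 < C) (hρ0 : 0 < ρ) (hρ1 : ρ < 1)
    (A B : ℕ → ℝ) (hBnonneg : ∀ t, 0 ≤ B t)
    (hrec : ∀ t, (1 + η * α) * A (t + 1) ≤ A t + η * L * B (t + 1))
    (hBbound : ∀ t, B t ≤ ρ ^ t * B 0 + (η / (1 - ρ)) * C) :
    ∀ t, A t ≤ A 0 / (1 + η * α) ^ t
      + ((t : ℝ) * η * L * B 0 * ρ / (1 + η * α)) * max ρ (1 / (1 + η * α)) ^ (t - 1)
      + η * L * C / (α * (1 - ρ)) := by
  set P := 1 + η * α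
  set r := max ρ (1 / P)
  have hP : 0 < P := by positivity
  have h1ρ : 0 < 1 - ρ := by linarith
  have hsub : ∀ t, P * A (t + 1) ≤ A t + η * L * (ρ ^ (t + 1) * B 0 + η / (1 - ρ) * C) :=
    fun t => (hrec t).trans (by gcongr; exact hBbound (t + 1))
  have hE : 0 ≤ η * L * C / (α * (1 - ρ)) := by positivity
  refine le_of_mul_succ_le_of_le_mul_succ hP hsub (fun t => ?_) (by simpa using hE)
  have hgeom : P * (A 0 / P ^ (t + 1)) = A 0 / P ^ t := by
    rw [pow_succ]; field_simp
  have hfixed : P * (η * L * C / (α * (1 - ρ)))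
      = η * L * C / (α * (1 - ρ)) + η * L * (η / (1 - ρ) * C) := by
    field_simp; ring
  have htransient : (t : ℝ) * η * L * B 0 * ρ / P * r ^ (t - 1) + η * L * (ρ ^ (t + 1) * B 0)
      ≤ P * (((t + 1 : ℕ) : ℝ) * η * L * B 0 * ρ / P * r ^ (t + 1 - 1)) := by
    have hc : 0 ≤ η * L * B 0 * ρ := by have := hBnonneg 0; positivity
    have hrate := mul_le_mul_of_nonneg_left
      (nat_mul_mul_pow_pred_add_pow_le hρ0.le (le_max_left ρ (1 / P)) (le_max_right ρ (1 / P)) t) hc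
    calc (t : ℝ) * η * L * B 0 * ρ / P * r ^ (t - 1) + η * L * (ρ ^ (t + 1) * B 0)
        = η * L * B 0 * ρ * (t * (1 / P) * r ^ (t - 1) + ρ ^ t) := by ring
      _ ≤ η * L * B 0 * ρ * ((t + 1) * r ^ t) := hrate
      _ = _ := by rw [Nat.add_sub_cancel]; push_cast; field_simp
  linarith

theorem stmt_12 (η α L C ρ : ℝ) (hη : 0 < η) (hα : 0 < α) (hL : 0 < L)
    (hC : 0 < C) (hρ0 : 0 < ρ) (hρ1 : ρ < 1)
    (A B : ℕ → ℝ) (hAnonneg : ∀ t, 0 ≤ A t) (hBnonneg : ∀ t, 0 ≤ B t)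
    (hrec : ∀ t, (1 + η * α) * A (t + 1) ≤ A t + η * L * B (t + 1))
    (hBbound : ∀ t, B t ≤ ρ ^ t * B 0 + (η / (1 - ρ)) * C) :
    ∀ t, A t ≤ A 0 / (1 + η * α) ^ t
      + ((t : ℝ) * η * L * B 0 * ρ / (1 + η * α)) * max ρ (1 / (1 + η * α)) ^ (t - 1)
      + η * L * C / (α * (1 - ρ)) :=
  stmt_12_general η α L C ρ hη hα hL hC hρ0 hρ1 A B hBnonneg hrec hBbound
end
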